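/- arXiv:1503.08082 — 3 statements merged into one kernel-verified Lean document; each statement's English description precedes it below -/
import Mathlib

section
/- Let V be a nonnegative random variable and G a standard Gaussian random variable independent of V, and for τ > 0 set Z_τ := -(1/2)·V·τ + √(V·τ)·G. Then for every k ∈ ℝ and τ > 0, E[(exp(Z_τ) - e^k)^+] = E[BS(k, V, τ)]. -/
open MeasureTheory ProbabilityTheory

/-- The standard normal cumulative distribution function. -/
noncomputable def Phi (x : ℝ) : ℝ :=
  ∫ s in Set.Iic x, Real.exp (-(s ^ 2) / 2) / Real.sqrt (2 * Real.pi)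

/-- The Black–Scholes call price, for strictly positive variance `w`. -/
noncomputable def BS (k w T : ℝ) : ℝ :=
  Phi (-k / Real.sqrt (w * T) + Real.sqrt (w * T) / 2)
    - Real.exp k * Phi (-k / Real.sqrt (w * T) - Real.sqrt (w * T) / 2)

/-- The Black–Scholes call price extended by its `w = 0` limit `max (1 - e^k) 0`. -/
noncomputable def BSe (k w T : ℝ) : ℝ :=
  if w = 0 then max (1 - Real.exp k) 0 else BS k w T

/-!
Condition on `V = v`: by independence and Tonelli the claim reduces to a Gaussian computation
with `σ = √(vτ)` (for `v = 0` both sides are `(1 - e^k)⁺`). The payoff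
`(exp (σG - σ²/2) - e^k)⁺` vanishes exactly on `G ≤ d := k/σ + σ/2`, and the density
`exp (σg - σ²/2)` turns `N(0,1)` into `N(σ,1)`, so the expectation is
`P(N(σ,1) > d) - e^k P(N(0,1) > d) = Φ(σ - d) - e^k Φ(-d)`.
-/

open Real Set

namespace ProbabilityTheory

lemma IndepFun.lintegral_comp_eq {Ω α β : Type*} [MeasurableSpace Ω] [MeasurableSpace α]
    [MeasurableSpace β] {μ : Measure Ω} [IsFiniteMeasure μ] {X : Ω → α} {Y : Ω → β}
    (hX : AEMeasurable X μ) (hY : AEMeasurable Y μ) (h : IndepFun X Y μ)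
    {f : α × β → ENNReal} (hf : Measurable f) :
    ∫⁻ ω, f (X ω, Y ω) ∂μ = ∫⁻ x, ∫⁻ y, f (x, y) ∂(μ.map Y) ∂(μ.map X) := by
  rw [← lintegral_prod _ hf.aemeasurable, ← (indepFun_iff_map_prod_eq_prod_map_map hX hY).1 h,
    lintegral_map' hf.aemeasurable (hX.prodMk hY)]

end ProbabilityTheory

lemma Phi_eq_measureReal_Iic (x : ℝ) : Phi x = (gaussianReal 0 1).real (Iic x) := by
  rw [measureReal_def, gaussianReal_apply_eq_integral _ one_ne_zero,
    ENNReal.toReal_ofReal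
      (setIntegral_nonneg measurableSet_Iic fun _ _ ↦ gaussianPDFReal_nonneg _ _ _)]
  refine setIntegral_congr_fun measurableSet_Iic fun s _ ↦ ?_
  simp [gaussianPDFReal, div_eq_inv_mul]

lemma Phi_monotone : Monotone Phi := fun _ _ hxy ↦ by
  simpa only [Phi_eq_measureReal_Iic] using measureReal_mono (Iic_subset_Iic.2 hxy)

lemma measureReal_gaussianReal_Ioi (c : ℝ) : (gaussianReal 0 1).real (Ioi c) = Phi (-c) := by
  have hneg : gaussianReal 0 1 = (gaussianReal 0 1).map (fun x ↦ -x) := by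
    rw [gaussianReal_map_neg, neg_zero]
  have := nullSingletonClass_gaussianReal (μ := 0) one_ne_zero
  rw [Phi_eq_measureReal_Iic, ← measureReal_congr Iio_ae_eq_Iic]
  conv_lhs => rw [hneg, map_measureReal_apply measurable_neg measurableSet_Ioi]
  simp

lemma measureReal_gaussianReal_shift_Ioi (σ d : ℝ) :
    (gaussianReal σ 1).real (Ioi d) = (gaussianReal 0 1).real (Ioi (d - σ)) := by
  rw [← zero_add σ, ← gaussianReal_map_add_const,
    map_measureReal_apply (measurable_add_const σ) measurableSet_Ioi, preimage_add_const_Ioi,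
    zero_add]

lemma integral_mul_exp_gaussianReal (σ : ℝ) (f : ℝ → ℝ) :
    ∫ g, f g * exp (σ * g - σ ^ 2 / 2) ∂gaussianReal 0 1 = ∫ g, f g ∂gaussianReal σ 1 := by
  rw [integral_gaussianReal_eq_integral_smul one_ne_zero,
    integral_gaussianReal_eq_integral_smul one_ne_zero]
  congr 1 with g
  simp only [gaussianPDFReal, NNReal.coe_one, mul_one, sub_zero, smul_eq_mul]
  have hdensity : exp (-g ^ 2 / 2) * exp (σ * g - σ ^ 2 / 2) = exp (-(g - σ) ^ 2 / 2) := by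
    rw [← exp_add]; ring_nf
  linear_combination (f g * (√(2 * π))⁻¹) * hdensity

lemma integrable_exp_mul_sub_sq_half_gaussianReal (σ : ℝ) :
    Integrable (fun g ↦ exp (σ * g - σ ^ 2 / 2)) (gaussianReal 0 1) := by
  simp_rw [exp_sub]
  exact (integrable_exp_mul_gaussianReal σ).div_const _

lemma integral_gaussianReal_call_payoff (k : ℝ) {σ : ℝ} (hσ : 0 < σ) :
    ∫ g, max (exp (σ * g - σ ^ 2 / 2) - exp k) 0 ∂gaussianReal 0 1
      = Phi (-k / σ + σ / 2) - exp k * Phi (-k / σ - σ / 2) := by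
  set d := k / σ + σ / 2 with hd
  have hd_lt_iff : ∀ g, d < g ↔ k < σ * g - σ ^ 2 / 2 := fun g ↦ by
    have : σ * g - σ ^ 2 / 2 - k = σ * (g - d) := by rw [hd]; field_simp; ring
    rw [← sub_pos, ← sub_pos (b := k), this, mul_pos_iff_of_pos_left hσ]
  have hpayoff : (fun g ↦ max (exp (σ * g - σ ^ 2 / 2) - exp k) 0)
      = (Ioi d).indicator fun g ↦ exp (σ * g - σ ^ 2 / 2) - exp k := by
    ext g
    by_cases hg : g ∈ Ioi d
    · rw [indicator_of_mem hg, max_eq_left (sub_nonneg.2 (exp_le_exp.2 ((hd_lt_iff g).1 hg).le))]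
    · rw [indicator_of_notMem hg,
        max_eq_right (sub_nonpos.2 (exp_le_exp.2 (not_lt.1 ((hd_lt_iff g).not.1 hg))))]
  have hexp_part : ∫ g in Ioi d, exp (σ * g - σ ^ 2 / 2) ∂gaussianReal 0 1 = Phi (σ - d) :=
    calc _ = ∫ g, (Ioi d).indicator 1 g * exp (σ * g - σ ^ 2 / 2) ∂gaussianReal 0 1 := by
          rw [← integral_indicator measurableSet_Ioi]
          congr 1 with g
          by_cases hg : g ∈ Ioi d <;> simp [hg]
      _ = (gaussianReal σ 1).real (Ioi d) := by
          rw [integral_mul_exp_gaussianReal, integral_indicator_one measurableSet_Ioi]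
      _ = Phi (σ - d) := by
          rw [measureReal_gaussianReal_shift_Ioi, measureReal_gaussianReal_Ioi, neg_sub]
  rw [hpayoff, integral_indicator measurableSet_Ioi,
    integral_sub (integrable_exp_mul_sub_sq_half_gaussianReal σ).integrableOn
      (integrable_const _).integrableOn, hexp_part,
    setIntegral_const, smul_eq_mul, measureReal_gaussianReal_Ioi, mul_comm,
    show σ - d = -k / σ + σ / 2 by rw [hd]; ring, show -d = -k / σ - σ / 2 by rw [hd]; ring]

lemma lintegral_gaussianReal_call_payoff (k : ℝ) {τ v : ℝ} (hτ : 0 < τ) (hv : 0 ≤ v) :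
    ∫⁻ g, ENNReal.ofReal (max (exp (-(1/2) * v * τ + √(v * τ) * g) - exp k) 0)
        ∂gaussianReal 0 1 = ENNReal.ofReal (BSe k v τ) := by
  rcases hv.eq_or_lt with rfl | hv
  · simp [BSe]
  have hvτ : 0 < v * τ := mul_pos hv hτ
  have hexponent : ∀ g, -(1/2) * v * τ + √(v * τ) * g = √(v * τ) * g - √(v * τ) ^ 2 / 2 :=
    fun g ↦ by rw [sq_sqrt hvτ.le]; ring
  have hint : Integrable (fun g ↦ max (exp (√(v * τ) * g - √(v * τ) ^ 2 / 2) - exp k) 0)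
      (gaussianReal 0 1) :=
    ((integrable_exp_mul_sub_sq_half_gaussianReal _).sub (integrable_const _)).pos_part
  simp_rw [hexponent]
  rw [← ofReal_integral_eq_lintegral_ofReal hint (ae_of_all _ fun _ ↦ le_max_right _ _),
    integral_gaussianReal_call_payoff k (sqrt_pos.2 hvτ), BSe, if_neg hv.ne', BS]

lemma measurable_BSe (k τ : ℝ) : Measurable fun w ↦ BSe k w τ := by
  have := Phi_monotone.measurable
  unfold BSe BS
  exact Measurable.ite (measurableSet_singleton 0) measurable_const (by fun_prop)

theorem stmt_1 {Ω : Type*} [MeasurableSpace Ω] (μ : Measure Ω) [IsProbabilityMeasure μ]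
    (V G : Ω → ℝ) (hV : Measurable V) (hG : Measurable G)
    (hVnn : ∀ ω, 0 ≤ V ω)
    (hGlaw : μ.map G = gaussianReal 0 1)
    (hindep : IndepFun V G μ)
    (k τ : ℝ) (hτ : 0 < τ) :
    ∫⁻ ω, ENNReal.ofReal
        (max (Real.exp (-(1/2) * V ω * τ + Real.sqrt (V ω * τ) * G ω) - Real.exp k) 0) ∂μ
      = ∫⁻ ω, ENNReal.ofReal (BSe k (V ω) τ) ∂μ := by
  have hpayoff : Measurable fun p : ℝ × ℝ ↦
      ENNReal.ofReal (max (exp (-(1/2) * p.1 * τ + √(p.1 * τ) * p.2) - exp k) 0) := by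
    fun_prop
  rw [hindep.lintegral_comp_eq hV.aemeasurable hG.aemeasurable hpayoff, hGlaw,
    ← lintegral_map (measurable_BSe k τ).ennreal_ofReal hV]
  refine lintegral_congr_ae ?_
  filter_upwards [(ae_map_iff hV.aemeasurable measurableSet_Ici).2 (ae_of_all _ hVnn)]
    with v hv
  exact lintegral_gaussianReal_call_payoff k hτ hv
end

section
/- Let k > 0, y > 0 and let τ̃ : (0,∞) → (0,∞) be a continuous function such that τ/τ̃(τ) → 0 as τ → 0⁺. Then there exist constants C₀ > 0 and τ₀ > 0 such that for all τ ∈ (0, τ₀): | BS(k, y/τ̃(τ), τ) · k²√(2π) · (τ̃(τ)/τ)^{3/2} · y^{-3/2} · exp(k²τ̃(τ)/(2yτ) - k/2) - 1 | ≤ C₀ · τ/τ̃(τ). Equivalently, BS(k, y/τ̃(τ), τ) = (y^{3/2}/(k²√(2π)))·(τ/τ̃(τ))^{3/2}·exp(-k²τ̃(τ)/(2yτ) + k/2)·(1 + O(τ/τ̃(τ))) as τ → 0⁺. -/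
/-
With `s = √(w T)` and `x∓ = k / s ∓ s / 2`, the identity `e^k φ(x₊) = φ(x₋)` turns the call price
into `φ(x₋) (R x₋ - R x₊)`, where `R x = Φ(-x) / φ(x)` is the Mills ratio. Comparing derivatives
on `(0, ∞)` with the Gaussian tail gives `R x = 1/x - 1/x³ + O(x⁻⁵)`, and inserting this expansion
shows that the normalised price is `1 + O(s²)` as `s → 0⁺`. Finally `s² = y τ / τ̃(τ)`.
-/

open Real MeasureTheory Filter Set Topology Asymptotics

noncomputable def phi (x : ℝ) : ℝ := exp (-(x ^ 2) / 2) / √(2 * π)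

lemma phi_pos (x : ℝ) : 0 < phi x := by
  unfold phi
  positivity

lemma continuous_phi : Continuous phi := by
  unfold phi
  fun_prop

lemma integrable_phi : Integrable phi := by
  have h : phi = fun x => exp (-(1 / 2) * x ^ 2) * (√(2 * π))⁻¹ := by
    funext x
    simp only [phi, div_eq_mul_inv]
    ring_nf
  rw [h]
  exact (integrable_exp_neg_mul_sq (by norm_num)).mul_const _

lemma hasDerivAt_phi (x : ℝ) : HasDerivAt phi (-x * phi x) x := by
  have h : HasDerivAt (fun x : ℝ => -(x ^ 2) / 2) (-x) x :=
    ((hasDerivAt_pow 2 x).neg.div_const 2).congr_deriv (by ring)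
  exact (h.exp.div_const √(2 * π)).congr_deriv (by simp only [phi]; ring)

lemma phi_neg (x : ℝ) : phi (-x) = phi x := by
  simp [phi]

lemma tendsto_phi_atTop : Tendsto phi atTop (𝓝 0) := by
  have h : Tendsto (fun x : ℝ => -(x ^ 2) / 2) atTop atBot :=
    (tendsto_neg_atTop_atBot.comp (tendsto_pow_atTop two_ne_zero)).atBot_div_const two_pos
  exact (tendsto_exp_atBot.comp h).div_const √(2 * π) |>.trans (by simp)

lemma Phi_sub_Phi (a b : ℝ) : Phi b - Phi a = ∫ s in a..b, phi s :=
  intervalIntegral.integral_Iic_sub_Iic integrable_phi.integrableOn integrable_phi.integrableOn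

lemma hasDerivAt_Phi (x : ℝ) : HasDerivAt Phi (phi x) x := by
  have h : Phi = fun z => Phi 0 + ∫ s in (0 : ℝ)..z, phi s := by
    funext z
    rw [← Phi_sub_Phi]
    ring
  rw [h]
  exact (intervalIntegral.integral_hasDerivAt_right integrable_phi.intervalIntegrable
    (continuous_phi.stronglyMeasurableAtFilter _ _) continuous_phi.continuousAt).const_add _

lemma tendsto_Phi_atBot : Tendsto Phi atBot (𝓝 0) := by
  have h := (intervalIntegral_tendsto_integral_Iic (μ := volume) 0 integrable_phi.integrableOn
    tendsto_id).const_sub (Phi 0)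
  have hPhi : (fun a => Phi 0 - ∫ s in a..0, phi s) = Phi := by
    funext a
    rw [← Phi_sub_Phi, sub_sub_cancel]
  rwa [Function.id_def, hPhi, show (∫ s in Iic (0 : ℝ), phi s) = Phi 0 from rfl, sub_self] at h

lemma hasDerivAt_Phi_neg_sub_phi_mul {p : ℝ → ℝ} {p' x : ℝ} (hp : HasDerivAt p p' x) :
    HasDerivAt (fun x => Phi (-x) - phi x * p x) (-(phi x * (1 + p' - x * p x))) x := by
  have hPhi := (hasDerivAt_Phi (-x)).comp x (hasDerivAt_neg x)
  rw [phi_neg] at hPhi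
  exact (hPhi.sub ((hasDerivAt_phi x).mul hp)).congr_deriv (by ring)

lemma tendsto_Phi_neg_sub_phi_mul {p : ℝ → ℝ} (hp : Tendsto p atTop (𝓝 0)) :
    Tendsto (fun x => Phi (-x) - phi x * p x) atTop (𝓝 0) := by
  simpa using (tendsto_Phi_atBot.comp tendsto_neg_atTop_atBot).sub (tendsto_phi_atTop.mul hp)

lemma nonneg_of_hasDerivAt_nonpos_of_tendsto_atTop {f f' : ℝ → ℝ} {a x : ℝ}
    (hf : ∀ y > a, HasDerivAt f (f' y) y) (hf' : ∀ y > a, f' y ≤ 0)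
    (hlim : Tendsto f atTop (𝓝 0)) (hx : a < x) : 0 ≤ f x := by
  have hanti : AntitoneOn f (Ioi a) := by
    refine antitoneOn_of_deriv_nonpos (convex_Ioi a)
      (fun y hy => (hf y hy).continuousAt.continuousWithinAt)
      (fun y hy => (hf y (by simpa using hy)).differentiableAt.differentiableWithinAt) ?_
    intro y hy
    rw [interior_Ioi] at hy
    rw [(hf y hy).deriv]
    exact hf' y hy
  refine le_of_tendsto hlim ?_
  filter_upwards [eventually_gt_atTop x] with y hy
  exact hanti hx (hx.trans hy) hy.le

section Mills

variable {p p' : ℝ → ℝ}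

lemma phi_mul_le_Phi_neg (hp : ∀ x > 0, HasDerivAt p (p' x) x) (hp0 : Tendsto p atTop (𝓝 0))
    (hsign : ∀ x > 0, 0 ≤ 1 + p' x - x * p x) {x : ℝ} (hx : 0 < x) :
    phi x * p x ≤ Phi (-x) :=
  sub_nonneg.1 <| nonneg_of_hasDerivAt_nonpos_of_tendsto_atTop
    (f := fun x => Phi (-x) - phi x * p x)
    (fun y hy => hasDerivAt_Phi_neg_sub_phi_mul (hp y hy))
    (fun y hy => neg_nonpos.2 (mul_nonneg (phi_pos y).le (hsign y hy)))
    (tendsto_Phi_neg_sub_phi_mul hp0) hx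

lemma Phi_neg_le_phi_mul (hp : ∀ x > 0, HasDerivAt p (p' x) x) (hp0 : Tendsto p atTop (𝓝 0))
    (hsign : ∀ x > 0, 1 + p' x - x * p x ≤ 0) {x : ℝ} (hx : 0 < x) :
    Phi (-x) ≤ phi x * p x := by
  have h := nonneg_of_hasDerivAt_nonpos_of_tendsto_atTop
    (f := fun x => -(Phi (-x) - phi x * p x))
    (fun y hy => (hasDerivAt_Phi_neg_sub_phi_mul (hp y hy)).neg)
    (fun y hy => neg_nonpos.2 (neg_nonneg.2
      (mul_nonpos_of_nonneg_of_nonpos (phi_pos y).le (hsign y hy))))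
    (by simpa using (tendsto_Phi_neg_sub_phi_mul hp0).neg) hx
  simpa using h

end Mills

lemma tendsto_inv_pow_atTop_zero {n : ℕ} (hn : n ≠ 0) :
    Tendsto (fun x : ℝ => (x ^ n)⁻¹) atTop (𝓝 0) :=
  (tendsto_pow_atTop hn).inv_tendsto_atTop

lemma hasDerivAt_inv_pow (n : ℕ) {x : ℝ} (hx : x ≠ 0) :
    HasDerivAt (fun x : ℝ => (x ^ n)⁻¹) (-n * (x ^ (n + 1))⁻¹) x := by
  refine ((hasDerivAt_pow n x).inv (pow_ne_zero n hx)).congr_deriv ?_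
  rcases n with _ | n
  · simp
  · simp only [Nat.add_sub_cancel]
    field_simp
    ring

noncomputable def millsRatio (x : ℝ) : ℝ := Phi (-x) / phi x

noncomputable def millsRatioApprox (x : ℝ) : ℝ := x⁻¹ - (x ^ 3)⁻¹

lemma tendsto_millsRatioApprox_atTop : Tendsto millsRatioApprox atTop (𝓝 0) := by
  show Tendsto (fun x : ℝ => x⁻¹ - (x ^ 3)⁻¹) atTop (𝓝 0)
  simpa using tendsto_inv_atTop_zero.sub (tendsto_inv_pow_atTop_zero three_ne_zero)

lemma hasDerivAt_millsRatioApprox {x : ℝ} (hx : x ≠ 0) :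
    HasDerivAt millsRatioApprox (-(x ^ 2)⁻¹ + 3 * (x ^ 4)⁻¹) x :=
  ((hasDerivAt_inv hx).sub (hasDerivAt_inv_pow 3 hx)).congr_deriv (by push_cast; ring)

lemma phi_mul_millsRatioApprox_le {x : ℝ} (hx : 0 < x) :
    phi x * millsRatioApprox x ≤ Phi (-x) := by
  refine phi_mul_le_Phi_neg
    (fun x hx => hasDerivAt_millsRatioApprox hx.ne') tendsto_millsRatioApprox_atTop
    (fun x hx => ?_) hx
  refine (by positivity : (0 : ℝ) ≤ 3 * (x ^ 4)⁻¹).trans_eq ?_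
  unfold millsRatioApprox
  field_simp
  ring

lemma Phi_neg_le_phi_mul_millsRatioApprox_add {x : ℝ} (hx : 0 < x) :
    Phi (-x) ≤ phi x * (millsRatioApprox x + 3 * (x ^ 5)⁻¹) := by
  refine Phi_neg_le_phi_mul (p := fun x => millsRatioApprox x + 3 * (x ^ 5)⁻¹)
    (fun x hx => (hasDerivAt_millsRatioApprox hx.ne').add
      ((hasDerivAt_inv_pow 5 hx.ne').const_mul 3))
    (by simpa using tendsto_millsRatioApprox_atTop.add
          ((tendsto_inv_pow_atTop_zero (n := 5) (by norm_num)).const_mul 3))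
    (fun x hx => ?_) hx
  refine le_of_eq_of_le ?_ (neg_nonpos.2 (by positivity) : -(15 * (x ^ 6)⁻¹) ≤ 0)
  unfold millsRatioApprox
  field_simp
  ring

lemma abs_millsRatio_sub_millsRatioApprox_le {x : ℝ} (hx : 0 < x) :
    |millsRatio x - millsRatioApprox x| ≤ 3 * (x ^ 5)⁻¹ := by
  have hphi := phi_pos x
  rw [abs_le, millsRatio, le_sub_iff_add_le, sub_le_iff_le_add, le_div_iff₀ hphi, div_le_iff₀ hphi]
  constructor
  · nlinarith [phi_mul_millsRatioApprox_le hx,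
      mul_pos hphi (by positivity : (0 : ℝ) < 3 * (x ^ 5)⁻¹)]
  · linarith [Phi_neg_le_phi_mul_millsRatioApprox_add hx]

noncomputable def bsRatio (k s : ℝ) : ℝ :=
  (Phi (-k / s + s / 2) - exp k * Phi (-k / s - s / 2)) * (k ^ 2 * √(2 * π)) / s ^ 3
    * exp (k ^ 2 / (2 * s ^ 2) - k / 2)

section bsRatio

variable {k s : ℝ}

lemma exp_mul_phi_add (hs : s ≠ 0) : exp k * phi (k / s + s / 2) = phi (k / s - s / 2) := by
  simp only [phi, mul_div_assoc', ← exp_add]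
  congr 2
  field_simp
  ring

lemma phi_sub_mul_exp (hs : s ≠ 0) :
    phi (k / s - s / 2) * √(2 * π) * exp (k ^ 2 / (2 * s ^ 2) - k / 2) = exp (-s ^ 2 / 8) := by
  have hπ : √(2 * π) ≠ 0 := by positivity
  rw [phi, div_mul_cancel₀ _ hπ, ← exp_add]
  congr 1
  field_simp
  ring

lemma Phi_neg_eq_phi_mul_millsRatio (x : ℝ) : Phi (-x) = phi x * millsRatio x :=
  (mul_div_cancel₀ _ (phi_pos x).ne').symm

lemma bsRatio_eq (hs : s ≠ 0) :
    bsRatio k s = exp (-s ^ 2 / 8)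
      * (k ^ 2 / s ^ 3 * (millsRatio (k / s - s / 2) - millsRatio (k / s + s / 2))) := by
  rw [bsRatio, show -k / s + s / 2 = -(k / s - s / 2) by ring,
    show -k / s - s / 2 = -(k / s + s / 2) by ring, Phi_neg_eq_phi_mul_millsRatio,
    Phi_neg_eq_phi_mul_millsRatio]
  linear_combination (k ^ 2 / s ^ 3 * (millsRatio (k / s - s / 2) - millsRatio (k / s + s / 2)))
      * phi_sub_mul_exp (k := k) hs
    - millsRatio (k / s + s / 2) * k ^ 2 * √(2 * π) / s ^ 3 * exp (k ^ 2 / (2 * s ^ 2) - k / 2)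
      * exp_mul_phi_add (k := k) hs

end bsRatio

lemma isBigO_sq_mul_of_continuousAt {h : ℝ → ℝ} (hh : ContinuousAt h 0) :
    (fun s => s ^ 2 * h s) =O[𝓝[>] 0] fun s => s ^ 2 := by
  simpa using (isBigO_refl (fun s : ℝ => s ^ 2) _).mul
    ((hh.tendsto.isBigO_one ℝ).mono nhdsWithin_le_nhds)

lemma abs_exp_neg_sub_one_le {x : ℝ} (hx : 0 ≤ x) : |exp (-x) - 1| ≤ x := by
  rw [abs_sub_comm, abs_of_nonneg (sub_nonneg.2 (exp_le_one_iff.2 (neg_nonpos.2 hx)))]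
  linarith [add_one_le_exp (-x)]

section bsRatio_asymptotics

variable {k s : ℝ}

lemma abs_millsRatio_diff_sub_approx_diff_le (hs : 0 < s) (hs2 : s ^ 2 < 2 * k) :
    |k ^ 2 / s ^ 3 * (millsRatio (k / s - s / 2) - millsRatio (k / s + s / 2))
        - k ^ 2 / s ^ 3 * (millsRatioApprox (k / s - s / 2) - millsRatioApprox (k / s + s / 2))|
      ≤ s ^ 2 * (96 * k ^ 2 * (((2 * k - s ^ 2) ^ 5)⁻¹ + ((2 * k + s ^ 2) ^ 5)⁻¹)) := by
  have hx_sub : k / s - s / 2 = (2 * k - s ^ 2) / (2 * s) := by field_simp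
  have hx_add : k / s + s / 2 = (2 * k + s ^ 2) / (2 * s) := by field_simp
  have ha : 0 < 2 * k - s ^ 2 := by linarith
  have hb : 0 < 2 * k + s ^ 2 := by nlinarith
  have h_sub := abs_millsRatio_sub_millsRatioApprox_le (x := k / s - s / 2)
    (by rw [hx_sub]; positivity)
  have h_add := abs_millsRatio_sub_millsRatioApprox_le (x := k / s + s / 2)
    (by rw [hx_add]; positivity)
  have hk : 0 < k := by nlinarith
  rw [← mul_sub, abs_mul, abs_of_pos (by positivity : 0 < k ^ 2 / s ^ 3), sub_sub_sub_comm]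
  calc _ ≤ k ^ 2 / s ^ 3 * (3 * ((k / s - s / 2) ^ 5)⁻¹ + 3 * ((k / s + s / 2) ^ 5)⁻¹) := by
        gcongr
        exact (abs_sub _ _).trans (add_le_add h_sub h_add)
    _ = _ := by
        rw [hx_sub, hx_add]
        field_simp
        ring

lemma millsRatioApprox_diff_sub_one_eq (hk : 0 < k) (hs : s ≠ 0) (hs2 : s ^ 2 ≠ 2 * k) :
    k ^ 2 / s ^ 3 * (millsRatioApprox (k / s - s / 2) - millsRatioApprox (k / s + s / 2)) - 1
      = s ^ 2 * (s ^ 2 / ((2 * k - s ^ 2) * (2 * k + s ^ 2))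
          - 16 * k ^ 2 * (12 * k ^ 2 + s ^ 4) / ((2 * k - s ^ 2) * (2 * k + s ^ 2)) ^ 3) := by
  have hx_sub : k / s - s / 2 = (2 * k - s ^ 2) / (2 * s) := by field_simp
  have hx_add : k / s + s / 2 = (2 * k + s ^ 2) / (2 * s) := by field_simp
  have ha : 2 * k - s ^ 2 ≠ 0 := sub_ne_zero.2 (Ne.symm hs2)
  have hb : 2 * k + s ^ 2 ≠ 0 := by positivity
  have ha' : k * 2 - s ^ 2 ≠ 0 := by rwa [mul_comm]
  have hb' : k * 2 + s ^ 2 ≠ 0 := by positivity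
  rw [hx_sub, hx_add, millsRatioApprox, millsRatioApprox]
  field_simp
  ring

theorem bsRatio_sub_one_isBigO (hk : 0 < k) :
    (fun s => bsRatio k s - 1) =O[𝓝[>] 0] fun s => s ^ 2 := by
  -- `bsRatio k = E * G`, and `G₀` is `G` with the Mills ratio replaced by its expansion.
  set E := fun s : ℝ => exp (-s ^ 2 / 8)
  set G := fun s : ℝ => k ^ 2 / s ^ 3 * (millsRatio (k / s - s / 2) - millsRatio (k / s + s / 2))
  set G₀ := fun s : ℝ =>
    k ^ 2 / s ^ 3 * (millsRatioApprox (k / s - s / 2) - millsRatioApprox (k / s + s / 2))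
  have hsmall : ∀ᶠ s in 𝓝[>] (0 : ℝ), 0 < s ∧ s ^ 2 < 2 * k := by
    have : ∀ᶠ s in 𝓝 (0 : ℝ), s ^ 2 < 2 * k :=
      (continuous_pow 2).continuousAt.eventually_lt continuousAt_const (by simpa using hk)
    exact eventually_mem_nhdsWithin.and (nhdsWithin_le_nhds this)
  have hE_mul {f : ℝ → ℝ} (hf : f =O[𝓝[>] 0] fun s => s ^ 2) :
      (fun s => E s * f s) =O[𝓝[>] 0] fun s => s ^ 2 := by
    refine (isBigO_of_le _ fun s => ?_).trans hf
    rw [norm_mul, norm_of_nonneg (exp_pos _).le]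
    exact mul_le_of_le_one_left (norm_nonneg _) (exp_le_one_iff.2 (by nlinarith [sq_nonneg s]))
  have hE : (fun s => E s - 1) =O[𝓝[>] 0] fun s => s ^ 2 := by
    refine IsBigO.of_bound (1 / 8) (Eventually.of_forall fun s => ?_)
    rw [norm_of_nonneg (sq_nonneg s), norm_eq_abs]
    show |exp (-s ^ 2 / 8) - 1| ≤ _
    rw [neg_div]
    linarith [abs_exp_neg_sub_one_le (by positivity : 0 ≤ s ^ 2 / 8)]
  have hG : (fun s => G s - G₀ s) =O[𝓝[>] 0] fun s => s ^ 2 := by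
    refine (IsBigO.of_bound' (hsmall.mono fun s hs => ?_)).trans
      (isBigO_sq_mul_of_continuousAt (h := fun s =>
        96 * k ^ 2 * (((2 * k - s ^ 2) ^ 5)⁻¹ + ((2 * k + s ^ 2) ^ 5)⁻¹))
        (by fun_prop (disch := simp; positivity)))
    exact (abs_millsRatio_diff_sub_approx_diff_le hs.1 hs.2).trans (le_abs_self _)
  have hG₀ : (fun s => G₀ s - 1) =O[𝓝[>] 0] fun s => s ^ 2 :=
    (isBigO_sq_mul_of_continuousAt (by fun_prop (disch := simp; positivity))).congr'
      (hsmall.mono fun s hs =>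
        (millsRatioApprox_diff_sub_one_eq hk hs.1.ne' hs.2.ne).symm) EventuallyEq.rfl
  refine ((hE_mul hG).add (hE_mul hG₀) |>.add hE).congr' (hsmall.mono fun s hs => ?_)
    EventuallyEq.rfl
  simp only [E, G, G₀, bsRatio_eq hs.1.ne']
  ring

end bsRatio_asymptotics

lemma sqrt_pow_three {u : ℝ} (hu : 0 ≤ u) : √u ^ 3 = u ^ ((3 : ℝ) / 2) := by
  rw [sqrt_eq_rpow, ← rpow_natCast, ← rpow_mul hu]
  norm_num

lemma BS_mul_eq_bsRatio {k y t τ : ℝ} (hy : 0 < y) (ht : 0 < t) (hτ : 0 < τ) :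
    BS k (y / t) τ * (k ^ 2 * √(2 * π)) * (t / τ) ^ ((3 : ℝ) / 2) * y ^ (-(3 : ℝ) / 2)
      * exp (k ^ 2 * t / (2 * y * τ) - k / 2) = bsRatio k √(y / t * τ) := by
  have hu : 0 < y / t * τ := by positivity
  have hpow : (t / τ) ^ ((3 : ℝ) / 2) * y ^ (-(3 : ℝ) / 2) = (√(y / t * τ) ^ 3)⁻¹ := by
    rw [neg_div, rpow_neg hy.le, ← div_eq_mul_inv, ← div_rpow (by positivity) hy.le,
      show t / τ / y = (y / t * τ)⁻¹ by field_simp, inv_rpow hu.le, sqrt_pow_three hu.le]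
  have hexp : k ^ 2 * t / (2 * y * τ) = k ^ 2 / (2 * √(y / t * τ) ^ 2) := by
    rw [sq_sqrt hu.le]
    field_simp
  rw [BS, bsRatio, mul_assoc (_ * _) ((t / τ) ^ _), hpow, hexp, div_eq_mul_inv _ (_ ^ 3)]

lemma tendsto_sqrt_div_mul_nhdsGT {y : ℝ} {t : ℝ → ℝ} (hy : 0 < y)
    (hpos : ∀ τ ∈ Ioi (0 : ℝ), 0 < t τ) (hlim : Tendsto (fun τ => τ / t τ) (𝓝[>] 0) (𝓝 0)) :
    Tendsto (fun τ => √(y / t τ * τ)) (𝓝[>] 0) (𝓝[>] 0) := by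
  have hvar : Tendsto (fun τ => y / t τ * τ) (𝓝[>] 0) (𝓝 0) := by
    have h := hlim.const_mul y
    rw [mul_zero] at h
    exact h.congr fun τ => by ring
  have h := (continuous_sqrt.tendsto 0).comp hvar
  rw [sqrt_zero] at h
  refine tendsto_nhdsWithin_iff.2 ⟨h, ?_⟩
  filter_upwards [self_mem_nhdsWithin] with τ (hτ : 0 < τ)
  have := hpos τ hτ
  exact sqrt_pos.2 (by positivity)

lemma exists_bound_Ioo_of_isBigO_nhdsGT {f g : ℝ → ℝ} {a : ℝ} (h : f =O[𝓝[>] a] g) :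
    ∃ C > 0, ∃ b > a, ∀ x ∈ Ioo a b, ‖f x‖ ≤ C * ‖g x‖ := by
  obtain ⟨C, hC, hCw⟩ := h.exists_pos
  obtain ⟨b, hb, hsub⟩ := mem_nhdsGT_iff_exists_Ioo_subset.1 hCw.bound
  exact ⟨C, hC, b, hb, fun x hx => hsub hx⟩

theorem stmt_2_general (k y : ℝ) (hk : 0 < k) (hy : 0 < y)
    (τt : ℝ → ℝ)
    (hpos : ∀ τ ∈ Set.Ioi (0 : ℝ), 0 < τt τ)
    (hlim : Filter.Tendsto (fun τ => τ / τt τ) (nhdsWithin 0 (Set.Ioi 0)) (nhds 0)) :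
    ∃ C₀ > (0 : ℝ), ∃ τ₀ > (0 : ℝ), ∀ τ ∈ Set.Ioo (0 : ℝ) τ₀,
      |BS k (y / τt τ) τ * (k ^ 2 * Real.sqrt (2 * Real.pi)) * (τt τ / τ) ^ ((3 : ℝ) / 2)
          * y ^ (-(3 : ℝ) / 2) * Real.exp (k ^ 2 * τt τ / (2 * y * τ) - k / 2) - 1|
        ≤ C₀ * (τ / τt τ) := by
  have hσ := tendsto_sqrt_div_mul_nhdsGT hy hpos hlim
  have hBS : ∀ᶠ τ in 𝓝[>] 0, ((fun s => bsRatio k s - 1) ∘ fun τ => √(y / τt τ * τ)) τ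
      = BS k (y / τt τ) τ * (k ^ 2 * √(2 * π)) * (τt τ / τ) ^ ((3 : ℝ) / 2)
          * y ^ (-(3 : ℝ) / 2) * exp (k ^ 2 * τt τ / (2 * y * τ) - k / 2) - 1 := by
    filter_upwards [self_mem_nhdsWithin] with τ hτ
    rw [Function.comp_apply, ← BS_mul_eq_bsRatio hy (hpos τ hτ) hτ]
  have hsq : ∀ᶠ τ in 𝓝[>] 0, ((fun s => s ^ 2) ∘ fun τ => √(y / τt τ * τ)) τ
      = y * (τ / τt τ) := by
    filter_upwards [self_mem_nhdsWithin] with τ (hτ : 0 < τ)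
    have := hpos τ hτ
    rw [Function.comp_apply, sq_sqrt (by positivity), div_mul_eq_mul_div, mul_div_assoc]
  obtain ⟨C, hC, τ₀, hτ₀, hbound⟩ := exists_bound_Ioo_of_isBigO_nhdsGT <|
    (((bsRatio_sub_one_isBigO hk).comp_tendsto hσ).congr' hBS hsq).trans
      (isBigO_const_mul_self y _ _)
  refine ⟨C, hC, τ₀, hτ₀, fun τ hτ => ?_⟩
  have h := hbound τ hτ
  rwa [norm_eq_abs, norm_of_nonneg (div_pos hτ.1 (hpos τ hτ.1)).le] at h

theorem stmt_2 (k y : ℝ) (hk : 0 < k) (hy : 0 < y)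
    (τt : ℝ → ℝ) (hcont : ContinuousOn τt (Set.Ioi 0))
    (hpos : ∀ τ ∈ Set.Ioi (0 : ℝ), 0 < τt τ)
    (hlim : Filter.Tendsto (fun τ => τ / τt τ) (nhdsWithin 0 (Set.Ioi 0)) (nhds 0)) :
    ∃ C₀ > (0 : ℝ), ∃ τ₀ > (0 : ℝ), ∀ τ ∈ Set.Ioo (0 : ℝ) τ₀,
      |BS k (y / τt τ) τ * (k ^ 2 * Real.sqrt (2 * Real.pi)) * (τt τ / τ) ^ ((3 : ℝ) / 2)
          * y ^ (-(3 : ℝ) / 2) * Real.exp (k ^ 2 * τt τ / (2 * y * τ) - k / 2) - 1|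
        ≤ C₀ * (τ / τt τ) :=
  stmt_2_general k y hk hy τt hpos hlim
end

section
/- Fix t > 0, ξ > 0, y₀ > 0 and set μ := log y₀ - ξ²t/2. Then for every L > 0 and k > 0, as τ → 0⁺: ∫_L^∞ BS(k, y/(τ|log τ|), τ)·ζ₁(y/(τ|log τ|)) dy = O( exp( -(1/(2ξ²t))·( log(L/(τ|log τ|)) - μ )² ) ). -/
open MeasureTheory Real Set Filter Topology ProbabilityTheory

lemma Phi_eq_setIntegral_gaussianPDFReal (x : ℝ) :
    Phi x = ∫ s in Iic x, gaussianPDFReal 0 1 s := by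
  simp [Phi, gaussianPDFReal, div_eq_inv_mul]

lemma Phi_nonneg (x : ℝ) : 0 ≤ Phi x := by
  rw [Phi_eq_setIntegral_gaussianPDFReal]
  exact setIntegral_nonneg measurableSet_Iic fun s _ => gaussianPDFReal_nonneg 0 1 s

lemma Phi_le_one (x : ℝ) : Phi x ≤ 1 := by
  rw [Phi_eq_setIntegral_gaussianPDFReal, ← integral_gaussianPDFReal_eq_one 0 one_ne_zero]
  exact setIntegral_le_integral (integrable_gaussianPDFReal 0 1)
    (Eventually.of_forall (gaussianPDFReal_nonneg 0 1))

lemma abs_BS_le_exp (k w T : ℝ) (hk : 0 ≤ k) : |BS k w T| ≤ exp k := by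
  have := one_le_exp hk
  have h₁ := Phi_nonneg (-k / √(w * T) + √(w * T) / 2)
  have h₂ := Phi_le_one (-k / √(w * T) + √(w * T) / 2)
  have h₃ := Phi_nonneg (-k / √(w * T) - √(w * T) / 2)
  have h₄ := Phi_le_one (-k / √(w * T) - √(w * T) / 2)
  rw [BS, abs_le]
  constructor <;> nlinarith

lemma tendsto_mul_abs_log_nhdsGT_zero :
    Tendsto (fun τ : ℝ => τ * |log τ|) (𝓝[>] 0) (𝓝[>] 0) := by
  have h0 : Tendsto (fun τ : ℝ => |τ * log τ|) (𝓝[>] 0) (𝓝 0) := by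
    simpa using (continuous_mul_log.abs.tendsto 0).mono_left nhdsWithin_le_nhds
  have hpos : ∀ᶠ τ in 𝓝[>] (0 : ℝ), τ ∈ Ioo 0 1 := Ioo_mem_nhdsGT one_pos
  refine tendsto_nhdsWithin_iff.2 ⟨h0.congr' ?_, ?_⟩
  · filter_upwards [hpos] with τ hτ
    rw [abs_mul, abs_of_pos hτ.1]
  · filter_upwards [hpos] with τ hτ
    exact mul_pos hτ.1 (abs_pos.2 (log_neg hτ.1 hτ.2).ne)

lemma tendsto_log_div_mul_abs_log_atTop {L : ℝ} (hL : 0 < L) :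
    Tendsto (fun τ => log (L / (τ * |log τ|))) (𝓝[>] 0) atTop := by
  simp only [div_eq_mul_inv]
  exact tendsto_log_atTop.comp
    (tendsto_mul_abs_log_nhdsGT_zero.inv_tendsto_nhdsGT_zero.const_mul_atTop hL)

lemma lognormal_kernel_le_rpow {s μ x₀ u : ℝ} (hs : 0 < s) (hx₀ : 0 < x₀) (hu : 0 < u) :
    exp (-(log u - μ) ^ 2 / (2 * s)) ≤
      exp (-(log x₀ - μ) ^ 2 / (2 * s)) * (x₀ / u) ^ ((log x₀ - μ) / s) := by
  rw [rpow_def_of_pos (div_pos hx₀ hu), ← exp_add, exp_le_exp, log_div hx₀.ne' hu.ne']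
  have hsq : -(log x₀ - μ) ^ 2 / (2 * s) + (log x₀ - μ) / s * (log x₀ - log u)
      - -(log u - μ) ^ 2 / (2 * s) = (log u - log x₀) ^ 2 / (2 * s) := by
    field_simp
    ring
  linarith [show 0 ≤ (log u - log x₀) ^ 2 / (2 * s) by positivity]

section

variable {E : Type*} [NormedAddCommGroup E] [NormedSpace ℝ E]

lemma integral_Ioi_comp_div (g : ℝ → E) (a : ℝ) {c : ℝ} (hc : 0 < c) :
    ∫ y in Ioi a, g (y / c) = c • ∫ u in Ioi (a / c), g u := by
  simp_rw [div_eq_inv_mul]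
  rw [integral_comp_mul_left_Ioi g a (inv_pos.2 hc), inv_inv]

lemma norm_setIntegral_Ioi_le_of_le_lognormal {f : ℝ → E} {M s μ x₀ : ℝ} (hs : 0 < s)
    (hx₀ : 0 < x₀) (hM : 0 ≤ M) (ha : 0 < log x₀ - μ)
    (hf : ∀ u ∈ Ioi x₀, ‖f u‖ ≤ M * (exp (-(log u - μ) ^ 2 / (2 * s)) / u)) :
    ‖∫ u in Ioi x₀, f u‖ ≤ M * (s / (log x₀ - μ)) * exp (-(log x₀ - μ) ^ 2 / (2 * s)) := by
  set a := log x₀ - μ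
  set β := a / s
  have hβ : 0 < β := div_pos ha hs
  set C := M * exp (-a ^ 2 / (2 * s)) * x₀ ^ β
  have hmajor : ∀ u ∈ Ioi x₀, ‖f u‖ ≤ C * u ^ (-1 - β) := by
    intro u hu
    have hu0 : 0 < u := hx₀.trans hu
    calc ‖f u‖ ≤ M * (exp (-(log u - μ) ^ 2 / (2 * s)) / u) := hf u hu
      _ ≤ M * (exp (-a ^ 2 / (2 * s)) * (x₀ / u) ^ β / u) := by
        gcongr
        exact lognormal_kernel_le_rpow hs hx₀ hu0
      _ = C * u ^ (-1 - β) := by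
        rw [div_rpow hx₀.le hu0.le, sub_eq_add_neg, rpow_add hu0, rpow_neg_one, rpow_neg hu0.le]
        simp only [C]
        field_simp
  have hint : IntegrableOn (fun u => C * u ^ (-1 - β)) (Ioi x₀) :=
    (integrableOn_Ioi_rpow_of_lt (by linarith) hx₀).const_mul C
  calc ‖∫ u in Ioi x₀, f u‖ ≤ ∫ u in Ioi x₀, C * u ^ (-1 - β) :=
        norm_integral_le_of_norm_le hint ((ae_restrict_iff' measurableSet_Ioi).2
          (Eventually.of_forall hmajor))
    _ = M * (s / a) * exp (-a ^ 2 / (2 * s)) := by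
        rw [integral_const_mul, integral_Ioi_rpow_of_lt (by linarith) hx₀,
          show -1 - β + 1 = -β by ring, rpow_neg hx₀.le]
        have : x₀ ^ β ≠ 0 := (rpow_pos_of_pos hx₀ β).ne'
        simp only [C, β]
        field_simp

lemma norm_setIntegral_Ioi_comp_div_le_of_le_lognormal {g : ℝ → E} {M s μ L c : ℝ}
    (hs : 0 < s) (hL : 0 < L) (hc : 0 < c) (hc₁ : c ≤ 1) (hM : 0 ≤ M)
    (ha : s ≤ log (L / c) - μ)
    (hg : ∀ u, 0 < u → ‖g u‖ ≤ M * (exp (-(log u - μ) ^ 2 / (2 * s)) / u)) :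
    ‖∫ y in Ioi L, g (y / c)‖ ≤ M * exp (-(log (L / c) - μ) ^ 2 / (2 * s)) := by
  have hLc : 0 < L / c := div_pos hL hc
  have ha₀ : 0 < log (L / c) - μ := hs.trans_le ha
  have htail := norm_setIntegral_Ioi_le_of_le_lognormal hs hLc hM ha₀
    fun u hu => hg u (hLc.trans hu)
  have hcs : c * (s / (log (L / c) - μ)) ≤ 1 :=
    mul_le_one₀ hc₁ (div_pos hs ha₀).le ((div_le_one ha₀).2 ha)
  rw [integral_Ioi_comp_div g L hc, norm_smul, norm_of_nonneg hc.le]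
  calc c * ‖∫ u in Ioi (L / c), g u‖
      ≤ c * (M * (s / (log (L / c) - μ)) * exp (-(log (L / c) - μ) ^ 2 / (2 * s))) := by
        gcongr
    _ = c * (s / (log (L / c) - μ)) * (M * exp (-(log (L / c) - μ) ^ 2 / (2 * s))) := by ring
    _ ≤ M * exp (-(log (L / c) - μ) ^ 2 / (2 * s)) := mul_le_of_le_one_left (by positivity) hcs

end

lemma norm_BS_mul_lognormal_le {k ξ t : ℝ} (hk : 0 ≤ k) (hξ : 0 < ξ) (ht : 0 < t) (μ τ : ℝ)
    {u : ℝ} (hu : 0 < u) :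
    ‖BS k u τ * ((u * ξ * √(2 * π * t))⁻¹ * exp (-(log u - μ) ^ 2 / (2 * ξ ^ 2 * t)))‖ ≤
      exp k * (ξ * √(2 * π * t))⁻¹ * (exp (-(log u - μ) ^ 2 / (2 * (ξ ^ 2 * t))) / u) := by
  have hζ : (u * ξ * √(2 * π * t))⁻¹ * exp (-(log u - μ) ^ 2 / (2 * ξ ^ 2 * t)) =
      (ξ * √(2 * π * t))⁻¹ * (exp (-(log u - μ) ^ 2 / (2 * (ξ ^ 2 * t))) / u) := by
    rw [← mul_assoc 2]
    field_simp
  rw [hζ, norm_mul, Real.norm_eq_abs, Real.norm_of_nonneg (by positivity), mul_assoc (exp k)]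
  gcongr
  exact abs_BS_le_exp k u τ hk

theorem stmt_10_general (t ξ y0 : ℝ) (ht : 0 < t) (hξ : 0 < ξ)
    (L k : ℝ) (hL : 0 < L) (hk : 0 < k) :
    let μ0 : ℝ := Real.log y0 - ξ ^ 2 * t / 2
    -- the lognormal density (case `p = 1`)
    let ζ1 : ℝ → ℝ := fun y =>
      (y * ξ * Real.sqrt (2 * Real.pi * t))⁻¹
        * Real.exp (-(Real.log y - μ0) ^ 2 / (2 * ξ ^ 2 * t))
    ∃ C₀ > (0 : ℝ), ∃ τ₀ > (0 : ℝ), ∀ τ ∈ Set.Ioo (0 : ℝ) τ₀,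
      |∫ y in Set.Ioi L, BS k (y / (τ * |Real.log τ|)) τ * ζ1 (y / (τ * |Real.log τ|))|
        ≤ C₀ * Real.exp (-(1 / (2 * ξ ^ 2 * t))
            * (Real.log (L / (τ * |Real.log τ|)) - μ0) ^ 2) := by
  intro μ0 ζ1
  have hc := tendsto_mul_abs_log_nhdsGT_zero
  have hev : ∀ᶠ τ in 𝓝[>] 0, 0 < τ * |log τ| ∧ τ * |log τ| ≤ 1 ∧
      ξ ^ 2 * t + μ0 ≤ log (L / (τ * |log τ|)) :=
    (hc.eventually eventually_mem_nhdsWithin).and (((hc.mono_right nhdsWithin_le_nhds).eventually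
      (eventually_le_nhds one_pos)).and
        ((tendsto_log_div_mul_abs_log_atTop hL).eventually_ge_atTop _))
  obtain ⟨τ₀, hτ₀, hsub⟩ := mem_nhdsGT_iff_exists_Ioo_subset.1 hev
  refine ⟨exp k * (ξ * √(2 * π * t))⁻¹, by positivity, τ₀, hτ₀, fun τ hτ => ?_⟩
  obtain ⟨hc₀, hc₁, hlog⟩ := hsub hτ
  rw [← Real.norm_eq_abs,
    show ∀ a : ℝ, -(1 / (2 * ξ ^ 2 * t)) * a ^ 2 = -a ^ 2 / (2 * (ξ ^ 2 * t)) from fun a => by ring]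
  exact norm_setIntegral_Ioi_comp_div_le_of_le_lognormal (by positivity) hL hc₀ hc₁
    (by positivity) (by linarith) fun u hu => norm_BS_mul_lognormal_le hk.le hξ ht μ0 τ hu

theorem stmt_10 (t ξ y0 : ℝ) (ht : 0 < t) (hξ : 0 < ξ) (hy0 : 0 < y0)
    (L k : ℝ) (hL : 0 < L) (hk : 0 < k) :
    let μ0 : ℝ := Real.log y0 - ξ ^ 2 * t / 2
    -- the lognormal density (case `p = 1`)
    let ζ1 : ℝ → ℝ := fun y =>
      (y * ξ * Real.sqrt (2 * Real.pi * t))⁻¹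
        * Real.exp (-(Real.log y - μ0) ^ 2 / (2 * ξ ^ 2 * t))
    ∃ C₀ > (0 : ℝ), ∃ τ₀ > (0 : ℝ), ∀ τ ∈ Set.Ioo (0 : ℝ) τ₀,
      |∫ y in Set.Ioi L, BS k (y / (τ * |Real.log τ|)) τ * ζ1 (y / (τ * |Real.log τ|))|
        ≤ C₀ * Real.exp (-(1 / (2 * ξ ^ 2 * t))
            * (Real.log (L / (τ * |Real.log τ|)) - μ0) ^ 2) :=
  stmt_10_general t ξ y0 ht hξ L k hL hk
end
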